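/- Let G be a group with elements σ_1, …, σ_{n-1} satisfying the braid relations σ_i σ_{i+1} σ_i = σ_{i+1} σ_i σ_{i+1} (1 ≤ i ≤ n-2) and σ_i σ_j = σ_j σ_i (|i-j| ≥ 2). Define t_{i,j} = σ_i σ_{i+1} ⋯ σ_{j-2} σ_{j-1}² σ_{j-2}⁻¹ ⋯ σ_{i+1}⁻¹ σ_i⁻¹ for 1 ≤ i < j ≤ n. Then (σ_1 σ_2 ⋯ σ_{i-1}) t_{i,j} (σ_1 σ_2 ⋯ σ_{i-1})⁻¹ = t_{1,j}. -/
import Mathlib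


/-- conjugation identity (Equation (1) in the proof of Theorem
4.4.1): (σ_1 ⋯ σ_{i-1}) t_{i,j} (σ_1 ⋯ σ_{i-1})⁻¹ = t_{1,j}, where
t_{i,j} = σ_i ⋯ σ_{j-2} σ_{j-1}² σ_{j-2}⁻¹ ⋯ σ_i⁻¹. -/
theorem conjugation_t_identity {G : Type*} [Group G] (n : ℕ)
    (σ : ℕ → G) (t : ℕ → ℕ → G)
    (hbraid1 : ∀ i, 1 ≤ i → i ≤ n - 2 →
      σ i * σ (i + 1) * σ i = σ (i + 1) * σ i * σ (i + 1))
    (hbraid2 : ∀ i j, 1 ≤ i → 1 ≤ j → i ≤ n - 1 → j ≤ n - 1 →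
      (i + 2 ≤ j ∨ j + 2 ≤ i) → σ i * σ j = σ j * σ i)
    (ht : ∀ i j, 1 ≤ i → i < j → j ≤ n →
      t i j = (((List.Ico i (j - 1)).map σ).prod) * (σ (j - 1)) ^ 2 *
        (((List.Ico i (j - 1)).map σ).prod)⁻¹) :
    ∀ i j, 1 ≤ i → i < j → j ≤ n →
      (((List.Ico 1 i).map σ).prod) * t i j * (((List.Ico 1 i).map σ).prod)⁻¹ =
        t 1 j := by
  intro i j h1 hij hjn
  have h1j : 1 < j := lt_of_le_of_lt h1 hij
  rw [ht i j h1 hij hjn, ht 1 j le_rfl h1j hjn,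
    ← List.Ico.append_consecutive h1 (Nat.le_sub_one_of_lt hij),
    List.map_append, List.prod_append]
  group
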